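/- For integers j, k, n with 0 ≤ j and n ≥ 0, define c_{kj}(n) = c_{k0}(n) (-1)^j ((-2ℓ)_j (-k-n)_j / (j! (2ℓ+2)_j)) · ₄F₃(-j, j+1, -k, -2ℓ-n-1; 1, -k-n, -2ℓ; 1), where c_{k0}(n) = (-1)^n 4^{-n} n! (2ℓ+2)_n / ((k+1)_n (2ℓ-k+1)_n). Then c_{kj}(n) satisfies the three-term recurrence -((i+k+n+1)(i-k-n-1)(2ℓ-i+1)/(2i+1)) c_{k,i-1}(n) + (i(i+1) - 4ℓ(ℓ+1)) c_{k,i}(n) + ((i+1)²(2ℓ+i+2)/(2i+1)) c_{k,i+1}(n) = (-2n(ℓ-k) + (2ℓ+2)(k-2ℓ)) c_{k,i}(n), with convention c_{k,-1}(n) = 0. -/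

import Mathlib

/-- Pochhammer symbol (rising factorial) `(a)_k`. -/
noncomputable def poch (a : ℝ) (k : ℕ) : ℝ := ∏ i ∈ Finset.range k, (a + i)

/-- The leading coefficient `c_{k0}(n) = (-1)^n 4^{-n} n!(2ℓ+2)_n/((k+1)_n (2ℓ-k+1)_n)`
with `L = 2ℓ`. -/
noncomputable def ck0 (L k n : ℕ) : ℝ :=
  (-1)^n * (1/4^n) * (Nat.factorial n : ℝ) * poch ((L:ℝ)+2) n
    / (poch ((k:ℝ)+1) n * poch ((L:ℝ)-(k:ℝ)+1) n)

/-- The coefficient `c_{kj}(n)`, involving the Racah polynomial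
`₄F₃(-j, j+1, -k, -2ℓ-n-1; 1, -k-n, -2ℓ; 1)` (terminating at `min j k`). -/
noncomputable def ckj (L k n j : ℕ) : ℝ :=
  ck0 L k n * (-1)^j
    * (poch (-(L:ℝ)) j * poch (-(k:ℝ)-(n:ℝ)) j / ((Nat.factorial j : ℝ) * poch ((L:ℝ)+2) j))
    * ∑ s ∈ Finset.range (min j k + 1),
        poch (-(j:ℝ)) s * poch ((j:ℝ)+1) s * poch (-(k:ℝ)) s * poch (-(L:ℝ)-(n:ℝ)-1) s /
          (poch 1 s * poch (-(k:ℝ)-(n:ℝ)) s * poch (-(L:ℝ)) s * (Nat.factorial s : ℝ))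

/-!
Write `c_{kj}(n) = c_{k0}(n) w_j F(j)` with `F(x) = ∑_{s ≤ k} h_s (-x)_s (x+1)_s` the `₄F₃`
(`w = racahWeight`, `h = racahCoeff`, `F = racahSum`). The second-order difference operator
`racahOperator (2ℓ) (k+n)` sends each basis function `(-x)_s (x+1)_s` to a combination of itself
and its predecessor; because the series is balanced, the term ratio of `h` makes these
contributions telescope, so `F` is an eigenfunction with eigenvalue `-2(2x+1)k(2ℓ+n+1)`. The
consecutive ratios of the weights `w_j` absorb the coefficients of the operator and turn this
eigenvalue equation into the three-term recurrence.
-/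

open Finset

lemma poch_eq_eval (a : ℝ) (s : ℕ) : poch a s = (ascPochhammer ℝ s).eval a := by
  induction s with
  | zero => simp [poch]
  | succ s ih => rw [ascPochhammer_succ_eval, ← ih, poch, prod_range_succ, poch]

lemma poch_succ (a : ℝ) (s : ℕ) : poch a (s + 1) = poch a s * (a + s) := by
  simp only [poch_eq_eval, ascPochhammer_succ_eval]

lemma mul_poch_add_one (a : ℝ) (s : ℕ) : a * poch (a + 1) s = poch a (s + 1) := by
  simp [poch_eq_eval, ascPochhammer_succ_left]

lemma poch_one (s : ℕ) : poch 1 s = s.factorial := by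
  simp [poch_eq_eval]

lemma poch_pos {a : ℝ} (ha : 0 < a) (s : ℕ) : 0 < poch a s := by
  rw [poch_eq_eval]; exact ascPochhammer_pos s a ha

lemma poch_neg_natCast_of_lt {m s : ℕ} (h : m < s) : poch (-m) s = 0 := by
  rw [poch_eq_eval]; exact ascPochhammer_eval_neg_coe_nat_of_lt h

lemma poch_neg_natCast_ne_zero {m s : ℕ} (h : s ≤ m) : poch (-m) s ≠ 0 := by
  rw [poch_eq_eval, ne_eq, ascPochhammer_eval_eq_zero_iff, neg_neg]
  rintro ⟨r, hr, hrm⟩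
  exact absurd (Nat.cast_injective hrm) (by omega)

-- `(-x)_s (x+1)_s = ∏_{r<s} (r(r+1) - x(x+1))`, a polynomial of degree `s` in `x(x+1)`.
noncomputable def racahBasis (x : ℝ) (s : ℕ) : ℝ := poch (-x) s * poch (x + 1) s

lemma racahBasis_zero (x : ℝ) : racahBasis x 0 = 1 := by
  simp [racahBasis, poch]

lemma racahBasis_natCast_of_lt {j s : ℕ} (h : j < s) : racahBasis j s = 0 := by
  rw [racahBasis, poch_neg_natCast_of_lt h, zero_mul]

lemma racahBasis_succ (x : ℝ) (s : ℕ) :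
    racahBasis x (s + 1) = (s - x) * (x + s + 1) * racahBasis x s := by
  rw [racahBasis, racahBasis, poch_succ, poch_succ]; ring

lemma racahBasis_add_one_succ (x : ℝ) (s : ℕ) :
    racahBasis (x + 1) (s + 1) = -((x + s + 1) * (x + s + 2)) * racahBasis x s := by
  have hneg : poch (-(x + 1)) (s + 1) = -(x + 1) * poch (-x) s := by
    rw [← mul_poch_add_one, show -(x + 1) + 1 = -x by ring]
  have hpos :
      (x + 1) * poch (x + 1 + 1) (s + 1) = poch (x + 1) s * ((x + s + 1) * (x + s + 2)) := by
    rw [mul_poch_add_one, poch_succ, poch_succ]; push_cast; ring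
  rw [racahBasis, racahBasis, hneg]
  linear_combination (-poch (-x) s) * hpos

lemma racahBasis_sub_one_succ (x : ℝ) (s : ℕ) :
    racahBasis (x - 1) (s + 1) = -((s - x) * (s + 1 - x)) * racahBasis x s := by
  have hneg : -x * poch (-(x - 1)) (s + 1) = poch (-x) s * ((s - x) * (s + 1 - x)) := by
    rw [show -(x - 1) = -x + 1 by ring, mul_poch_add_one, poch_succ, poch_succ]; push_cast; ring
  have hpos : poch (x - 1 + 1) (s + 1) = x * poch (x + 1) s := by
    rw [sub_add_cancel, mul_poch_add_one]
  rw [racahBasis, racahBasis, hpos]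
  linear_combination (-poch (x + 1) s) * hneg

noncomputable def racahOperator (a b : ℝ) (f : ℝ → ℝ) (x : ℝ) : ℝ :=
  (x - a) * (x - b) * (x + 1) * (f (x + 1) - f x)
    + x * (x + a + 1) * (x + b + 1) * (f (x - 1) - f x)

lemma racahOperator_racahBasis_zero (a b x : ℝ) :
    racahOperator a b (racahBasis · 0) x = 0 := by
  simp [racahOperator, racahBasis_zero]

lemma racahOperator_racahBasis_succ (a b x : ℝ) (s : ℕ) :
    racahOperator a b (racahBasis · (s + 1)) x
      = 2 * (2 * x + 1) * ((s + 1) * (s - a - b) * racahBasis x (s + 1)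
          - (s + 1) ^ 2 * (a - s) * (b - s) * racahBasis x s) := by
  rw [racahOperator, racahBasis_add_one_succ, racahBasis_sub_one_succ, racahBasis_succ]
  ring

lemma racahOperator_sum {ι : Type*} (a b : ℝ) (S : Finset ι) (c : ι → ℝ) (f : ι → ℝ → ℝ)
    (x : ℝ) :
    racahOperator a b (fun y ↦ ∑ i ∈ S, c i * f i y) x
      = ∑ i ∈ S, c i * racahOperator a b (f i) x := by
  simp only [racahOperator, mul_sum, ← sum_sub_distrib, ← sum_add_distrib]
  exact sum_congr rfl fun i _ ↦ by ring

-- `hc` is the term ratio of a terminating balanced series; balancedness is what makes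
-- `s (s - 1 - a - b) - (s - k) (s - (1 + a + b - k))` independent of `s`.
lemma racahOperator_sum_racahBasis (a b : ℝ) (k : ℕ) (c : ℕ → ℝ)
    (hc : ∀ s < k, c (s + 1) * ((s + 1) ^ 2 * (a - s) * (b - s))
      = c s * ((s - k) * (s - (1 + a + b - k)))) (x : ℝ) :
    racahOperator a b (fun y ↦ ∑ s ∈ range (k + 1), c s * racahBasis y s) x
      = -2 * (2 * x + 1) * k * (1 + a + b - k) * ∑ s ∈ range (k + 1), c s * racahBasis x s := by
  have hdiag : ∑ s ∈ range k, c (s + 1) * ((s + 1) * (s - a - b) * racahBasis x (s + 1))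
      = ∑ s ∈ range (k + 1), c s * (s * (s - 1 - a - b) * racahBasis x s) := by
    rw [sum_range_succ' _ k]; simp
  have hsub : ∑ s ∈ range k, c (s + 1) * ((s + 1) ^ 2 * (a - s) * (b - s) * racahBasis x s)
      = ∑ s ∈ range (k + 1), c s * ((s - k) * (s - (1 + a + b - k)) * racahBasis x s) := by
    rw [sum_range_succ, sub_self, zero_mul, zero_mul, mul_zero, add_zero]
    refine sum_congr rfl fun s hs ↦ ?_
    linear_combination racahBasis x s * hc s (mem_range.mp hs)
  rw [racahOperator_sum, sum_range_succ', racahOperator_racahBasis_zero, mul_zero, add_zero]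
  simp_rw [racahOperator_racahBasis_succ]
  calc _ = 2 * (2 * x + 1) *
        (∑ s ∈ range k, c (s + 1) * ((s + 1) * (s - a - b) * racahBasis x (s + 1))
          - ∑ s ∈ range k, c (s + 1) * ((s + 1) ^ 2 * (a - s) * (b - s) * racahBasis x s)) := by
        rw [← sum_sub_distrib, mul_sum]
        exact sum_congr rfl fun s _ ↦ by ring
    _ = _ := by
      rw [hdiag, hsub, ← sum_sub_distrib, mul_sum, mul_sum]
      exact sum_congr rfl fun s _ ↦ by ring

noncomputable def racahCoeff (L k n s : ℕ) : ℝ :=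
  poch (-(k : ℝ)) s * poch (-(L : ℝ) - n - 1) s /
    (poch 1 s * poch (-(k : ℝ) - n) s * poch (-(L : ℝ)) s * (Nat.factorial s : ℝ))

lemma racahCoeff_succ (L k n : ℕ) (hk : k ≤ L) (s : ℕ) (hs : s < k) :
    racahCoeff L k n (s + 1) * ((s + 1) ^ 2 * (L - s) * ((k + n : ℝ) - s))
      = racahCoeff L k n s * ((s - k) * (s - (1 + L + (k + n : ℝ) - k))) := by
  have hkn : poch (-(k : ℝ) - n) s ≠ 0 := by
    rw [show -(k : ℝ) - n = -((k + n : ℕ) : ℝ) by push_cast; ring]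
    exact poch_neg_natCast_ne_zero (by omega)
  have hL : poch (-(L : ℝ)) s ≠ 0 := poch_neg_natCast_ne_zero (by omega)
  have hkn' : -(k : ℝ) - n + s ≠ 0 := by
    have : (s : ℝ) < k + n := by exact_mod_cast (show s < k + n by omega)
    linarith
  have hL' : -(L : ℝ) + s ≠ 0 := by
    have : (s : ℝ) < L := by exact_mod_cast (show s < L by omega)
    linarith
  simp only [racahCoeff, poch_one, poch_succ, Nat.factorial_succ]
  push_cast
  field_simp
  ring

noncomputable def racahSum (L k n : ℕ) (x : ℝ) : ℝ :=
  ∑ s ∈ range (k + 1), racahCoeff L k n s * racahBasis x s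

noncomputable def racahWeight (L k n j : ℕ) : ℝ :=
  (-1) ^ j * (poch (-(L : ℝ)) j * poch (-(k : ℝ) - n) j
    / ((Nat.factorial j : ℝ) * poch ((L : ℝ) + 2) j))

lemma racahWeight_succ (L k n j : ℕ) :
    (j + 1) * (L + j + 2) * racahWeight L k n (j + 1)
      = -((L - j) * (k + n - j)) * racahWeight L k n j := by
  have hL : poch ((L : ℝ) + 2) j ≠ 0 := (poch_pos (by positivity) j).ne'
  simp only [racahWeight, poch_succ, Nat.factorial_succ, pow_succ]
  push_cast
  field_simp
  ring

lemma ckj_eq_racahSum (L k n j : ℕ) :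
    ckj L k n j = ck0 L k n * racahWeight L k n j * racahSum L k n j := by
  have htrunc : ∑ s ∈ range (min j k + 1), racahCoeff L k n s * racahBasis j s
      = racahSum L k n j := by
    refine sum_subset (range_subset_range.2 (by omega)) fun s hs hsj ↦ ?_
    rw [racahBasis_natCast_of_lt (by simp only [mem_range] at hs hsj; omega), mul_zero]
  rw [ckj, ← htrunc, racahWeight, mul_assoc (ck0 L k n)]
  simp only [racahCoeff, racahBasis]
  exact congrArg _ (sum_congr rfl fun _ _ ↦ by ring)

lemma ckj_succ_mul (L k n i : ℕ) :
    (i + 1) ^ 2 * (L + i + 2) * ckj L k n (i + 1)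
      = -((i - L) * (i - k - n) * (i + 1))
          * (ck0 L k n * racahWeight L k n i * racahSum L k n (i + 1)) := by
  rw [ckj_eq_racahSum]
  push_cast
  linear_combination (ck0 L k n * (i + 1) * racahSum L k n (i + 1)) * racahWeight_succ L k n i

-- Multiplied out because `w_i` vanishes while `w_{i-1}` does not at `i = L + 1` and
-- `i = k + n + 1`; there the factor on the left vanishes too.
lemma ckj_pred_mul (L k n i : ℕ) :
    (i + k + n + 1) * (i - k - n - 1) * (L - i + 1) * (if i = 0 then 0 else ckj L k n (i - 1))
      = i * (i + L + 1) * (i + k + n + 1)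
          * (ck0 L k n * racahWeight L k n i * racahSum L k n (i - 1)) := by
  rcases i with _ | m
  · simp
  · rw [if_neg m.succ_ne_zero, Nat.add_sub_cancel, ckj_eq_racahSum]
    push_cast
    rw [add_sub_cancel_right]
    linear_combination
      (-(ck0 L k n * (m + k + n + 2) * racahSum L k n m)) * racahWeight_succ L k n m

theorem ckj_recurrence_general (L k n : ℕ) (hk : k ≤ L) (i : ℕ) :
    -((((i:ℝ)+(k:ℝ)+(n:ℝ)+1)*((i:ℝ)-(k:ℝ)-(n:ℝ)-1)*(2*((L:ℝ)/2)-(i:ℝ)+1))/(2*(i:ℝ)+1))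
        * (if i = 0 then 0 else ckj L k n (i-1))
      + ((i:ℝ)*((i:ℝ)+1) - 4*((L:ℝ)/2)*(((L:ℝ)/2)+1)) * ckj L k n i
      + ((((i:ℝ)+1)^2*(2*((L:ℝ)/2)+(i:ℝ)+2))/(2*(i:ℝ)+1)) * ckj L k n (i+1)
    = (-2*(n:ℝ)*(((L:ℝ)/2)-(k:ℝ)) + (2*((L:ℝ)/2)+2)*((k:ℝ)-2*((L:ℝ)/2))) * ckj L k n i := by
  have hF : racahOperator L (k + n) (racahSum L k n) i
      = -2 * (2 * i + 1) * k * (1 + L + (k + n : ℝ) - k) * racahSum L k n i :=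
    racahOperator_sum_racahBasis _ _ k _ (racahCoeff_succ L k n hk) _
  have hprev := ckj_pred_mul L k n i
  have hnext := ckj_succ_mul L k n i
  rw [racahOperator] at hF
  rw [ckj_eq_racahSum L k n i]
  field_simp
  linear_combination (-4) * hprev + 4 * hnext - 4 * ck0 L k n * racahWeight L k n i * hF

/-- The three-term (contiguous Racah) recurrence satisfied by the `c_{kj}(n)`
(with `ℓ = L/2`, `c_{k,-1}(n) = 0`). -/
theorem ckj_recurrence (L k n : ℕ) (hL : 1 ≤ L) (hk : k ≤ L) (i : ℕ) :
    -((((i:ℝ)+(k:ℝ)+(n:ℝ)+1)*((i:ℝ)-(k:ℝ)-(n:ℝ)-1)*(2*((L:ℝ)/2)-(i:ℝ)+1))/(2*(i:ℝ)+1))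
        * (if i = 0 then 0 else ckj L k n (i-1))
      + ((i:ℝ)*((i:ℝ)+1) - 4*((L:ℝ)/2)*(((L:ℝ)/2)+1)) * ckj L k n i
      + ((((i:ℝ)+1)^2*(2*((L:ℝ)/2)+(i:ℝ)+2))/(2*(i:ℝ)+1)) * ckj L k n (i+1)
    = (-2*(n:ℝ)*(((L:ℝ)/2)-(k:ℝ)) + (2*((L:ℝ)/2)+2)*((k:ℝ)-2*((L:ℝ)/2))) * ckj L k n i :=
  ckj_recurrence_general L k n hk i
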